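/- arXiv:2603.08226 — 2 statements merged into one kernel-verified Lean document; each statement's English description precedes it below -/
import Mathlib

section
/- Let 0 < C < 1 and 0 ≤ η < 1. Then ∫₀^η ∫_{−C√(2y(1−y))}^{C√(2y(1−y))} (1 − x² − y²)^{−3/2} dx dy = (2C/√(1−C²)) · artanh( √(2η)·√(1−C²) / √(1+η−2C²η) ) − 2·arctan( C√(2η) / √(1+η−2C²η) ). Equivalently, this is the hyperbolic area of the truncated h-elliptic parabolic disk E^C_η = {(x,y) : x²/C² + 2y² − 2y ≤ 0, y ≤ η}. -/
/-!
Integrating first in `x`, the primitive `x / ((1 - y²) √(1 - y² - x²))` of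
`(1 - y² - x²)^(-3/2)` turns the inner integral into `2 C w / (1 - y²)`, where `w = √(2y / P)`
and `P = 1 + y - 2C²y`. Then `w' = 1 / (P² w)`, `1 - (1 - C²) w² = (1 - y) / P` and
`1 + C² w² = (1 + y) / P`, so by partial fractions `2 C w / (1 - y²)` is the derivative of
`2 (C / √(1 - C²) · artanh (√(1 - C²) w) - arctan (C w))`, which vanishes at `y = 0`.
-/

noncomputable def artanh (x : ℝ) : ℝ := Real.log ((1 + x) / (1 - x)) / 2

open Real hiding artanh
open Set intervalIntegral

lemma hasDerivAt_artanh {x : ℝ} (hx : x ^ 2 < 1) : HasDerivAt artanh (1 / (1 - x ^ 2)) x := by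
  have h1 : 0 < 1 + x := by nlinarith
  have h2 : 0 < 1 - x := by nlinarith
  have hq : HasDerivAt (fun t => (1 + t) / (1 - t)) (2 / (1 - x) ^ 2) x := by
    refine (((hasDerivAt_id' x).const_add 1).div ((hasDerivAt_id' x).const_sub 1)
      h2.ne').congr_deriv ?_
    ring
  have h3 : 1 - x ^ 2 ≠ 0 := (sub_pos.2 hx).ne'
  refine ((hq.log (div_pos h1 h2).ne').div_const 2).congr_deriv ?_
  field_simp
  ring

lemma rpow_neg_three_div_two {u : ℝ} (hu : 0 < u) : u ^ (-(3:ℝ) / 2) = (u * √u)⁻¹ := by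
  rw [show -(3:ℝ) / 2 = -(1 + 1 / 2) by norm_num, rpow_neg hu.le, rpow_add hu, rpow_one,
    sqrt_eq_rpow]

lemma hasDerivAt_div_mul_sqrt_sub_sq {b x : ℝ} (hx : x ^ 2 < b) :
    HasDerivAt (fun t => t / (b * √(b - t ^ 2))) ((b - x ^ 2) ^ (-(3:ℝ) / 2)) x := by
  have hb : 0 < b := (sq_nonneg x).trans_lt hx
  have hu : 0 < b - x ^ 2 := sub_pos.2 hx
  have hs : √(b - x ^ 2) ^ 2 = b - x ^ 2 := sq_sqrt hu.le
  have hsqrt := (((hasDerivAt_pow 2 x).const_sub b).sqrt hu.ne').const_mul b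
  have : 0 < √(b - x ^ 2) := sqrt_pos.2 hu
  refine ((hasDerivAt_id' x).div hsqrt (by positivity)).congr_deriv ?_
  rw [rpow_neg_three_div_two hu]
  norm_num
  field_simp
  linear_combination -x ^ 2 * hs

lemma integral_sub_sq_rpow_neg_three_div_two {a b : ℝ} (hab : a ^ 2 < b) :
    ∫ x in -a..a, (b - x ^ 2) ^ (-(3:ℝ) / 2) = 2 * a / (b * √(b - a ^ 2)) := by
  have hlt : ∀ x ∈ uIcc (-a) a, x ^ 2 < b := fun x hx => by
    rcases mem_uIcc.1 hx with h | h <;> nlinarith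
  rw [integral_eq_sub_of_hasDerivAt (fun x hx => hasDerivAt_div_mul_sqrt_sub_sq (hlt x hx))
    (ContinuousOn.intervalIntegrable ?_)]
  · rw [neg_sq]; ring
  · exact ContinuousOn.rpow_const (by fun_prop) fun x hx => Or.inl (sub_pos.2 (hlt x hx)).ne'

/-- `C * chordSlope C y = a / √(1 - y² - a²)` for the half-width `a = C √(2y(1-y))` of the
disk at height `y`. -/
noncomputable def chordSlope (C y : ℝ) : ℝ := √(2 * y / (1 + y - 2 * C ^ 2 * y))

section chordSlope

variable {C y : ℝ}

lemma one_add_sub_two_sq_mul_pos (hC : C ^ 2 < 1) (hy0 : 0 ≤ y) (hy1 : y < 1) :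
    0 < 1 + y - 2 * C ^ 2 * y := by
  nlinarith

lemma integral_parabolic_chord (hC : C ^ 2 < 1) (hy0 : 0 ≤ y) (hy1 : y < 1) :
    ∫ x in -(C * √(2 * y * (1 - y)))..(C * √(2 * y * (1 - y))),
        (1 - x ^ 2 - y ^ 2) ^ (-(3:ℝ) / 2) = 2 * C * chordSlope C y / (1 - y ^ 2) := by
  have hP := one_add_sub_two_sq_mul_pos hC hy0 hy1
  have hdisc : 1 - y ^ 2 - (C * √(2 * y * (1 - y))) ^ 2 = (1 - y) * (1 + y - 2 * C ^ 2 * y) := by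
    rw [mul_pow, sq_sqrt (by nlinarith)]
    ring
  have hab : (C * √(2 * y * (1 - y))) ^ 2 < 1 - y ^ 2 := by
    nlinarith [mul_pos (sub_pos.2 hy1) hP]
  simp_rw [sub_right_comm (1:ℝ) _ (y ^ 2)]
  rw [integral_sub_sq_rpow_neg_three_div_two hab, hdisc, chordSlope,
    sqrt_div (by positivity), sqrt_mul (by positivity : (0:ℝ) ≤ 2 * y),
    sqrt_mul (by linarith : (0:ℝ) ≤ 1 - y)]
  have : 0 < √(1 - y) := sqrt_pos.2 (by linarith)
  have : 0 < √(1 + y - 2 * C ^ 2 * y) := sqrt_pos.2 hP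
  have : 1 - y ^ 2 ≠ 0 := by nlinarith
  field_simp

lemma sq_chordSlope (hy0 : 0 ≤ y) (hP : 0 < 1 + y - 2 * C ^ 2 * y) :
    chordSlope C y ^ 2 = 2 * y / (1 + y - 2 * C ^ 2 * y) :=
  sq_sqrt (by positivity)

lemma hasDerivAt_chordSlope (hy : 0 < y) (hP : 0 < 1 + y - 2 * C ^ 2 * y) :
    HasDerivAt (chordSlope C) (1 / ((1 + y - 2 * C ^ 2 * y) ^ 2 * chordSlope C y)) y := by
  have hq : HasDerivAt (fun t => 2 * t / (1 + t - 2 * C ^ 2 * t))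
      (2 / (1 + y - 2 * C ^ 2 * y) ^ 2) y := by
    have hden : HasDerivAt (fun t => 1 + t - 2 * C ^ 2 * t) (1 - 2 * C ^ 2) y :=
      (((hasDerivAt_id' y).const_add 1).sub ((hasDerivAt_id' y).const_mul _)).congr_deriv
        (by ring)
    refine (((hasDerivAt_id' y).const_mul 2).div hden hP.ne').congr_deriv ?_
    field_simp
    ring
  have hw : 0 < chordSlope C y := sqrt_pos.2 (by positivity)
  refine (hq.sqrt (by positivity)).congr_deriv ?_
  rw [← chordSlope]
  field_simp

lemma continuousOn_chordSlope (hC : C ^ 2 < 1) : ContinuousOn (chordSlope C) (Ico 0 1) :=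
  ((continuousOn_const.mul continuousOn_id).div (by fun_prop)
    fun y hy => (one_add_sub_two_sq_mul_pos hC hy.1 hy.2).ne').sqrt

end chordSlope

/-- The derivative is `c w' (1 / (1 - k²w²) - 1 / (1 + c²w²))`, a single fraction because
`c² + k² = 1`. -/
lemma hasDerivAt_div_mul_artanh_sub_arctan {w : ℝ → ℝ} {w' t c k : ℝ}
    (hw : HasDerivAt w w' t) (hck : c ^ 2 + k ^ 2 = 1) (hk : k ≠ 0) (hkw : (k * w t) ^ 2 < 1) :
    HasDerivAt (fun s => c / k * artanh (k * w s) - arctan (c * w s))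
      (c * w t ^ 2 * w' / ((1 - (k * w t) ^ 2) * (1 + (c * w t) ^ 2))) t := by
  have hA := ((hasDerivAt_artanh hkw).comp t (hw.const_mul k)).const_mul (c / k)
  refine (hA.sub (hw.const_mul c).arctan).congr_deriv ?_
  have h1 : 1 - (k * w t) ^ 2 ≠ 0 := (sub_pos.2 hkw).ne'
  have h2 : 1 + (c * w t) ^ 2 ≠ 0 := by positivity
  set u := 1 - (k * w t) ^ 2 with hu
  set v := 1 + (c * w t) ^ 2 with hv
  field_simp
  linear_combination c * w t ^ 2 * w' * hck + c * w' * (hu - hv)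

noncomputable def areaPrimitive (C t : ℝ) : ℝ :=
  2 * (C / √(1 - C ^ 2) * artanh (√(1 - C ^ 2) * chordSlope C t) - arctan (C * chordSlope C t))

section areaPrimitive

variable {C y : ℝ}

lemma one_sub_sq_mul_chordSlope (hC : C ^ 2 < 1) (hy0 : 0 ≤ y) (hy1 : y < 1) :
    1 - (√(1 - C ^ 2) * chordSlope C y) ^ 2 = (1 - y) / (1 + y - 2 * C ^ 2 * y) := by
  have hP := one_add_sub_two_sq_mul_pos hC hy0 hy1
  rw [mul_pow, sq_sqrt (by linarith), sq_chordSlope hy0 hP]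
  set P := 1 + y - 2 * C ^ 2 * y with hPdef
  field_simp
  linear_combination hPdef

lemma one_add_sq_mul_chordSlope (hC : C ^ 2 < 1) (hy0 : 0 ≤ y) (hy1 : y < 1) :
    1 + (C * chordSlope C y) ^ 2 = (1 + y) / (1 + y - 2 * C ^ 2 * y) := by
  have hP := one_add_sub_two_sq_mul_pos hC hy0 hy1
  rw [mul_pow, sq_chordSlope hy0 hP]
  set P := 1 + y - 2 * C ^ 2 * y with hPdef
  field_simp
  linear_combination hPdef

lemma sq_mul_chordSlope_lt_one (hC : C ^ 2 < 1) (hy0 : 0 ≤ y) (hy1 : y < 1) :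
    (√(1 - C ^ 2) * chordSlope C y) ^ 2 < 1 := by
  have := one_sub_sq_mul_chordSlope hC hy0 hy1
  have : 0 < (1 - y) / (1 + y - 2 * C ^ 2 * y) :=
    div_pos (by linarith) (one_add_sub_two_sq_mul_pos hC hy0 hy1)
  linarith

lemma hasDerivAt_areaPrimitive (hC : C ^ 2 < 1) (hy0 : 0 < y) (hy1 : y < 1) :
    HasDerivAt (areaPrimitive C) (2 * C * chordSlope C y / (1 - y ^ 2)) y := by
  have hP := one_add_sub_two_sq_mul_pos hC hy0.le hy1
  have hk : 0 < √(1 - C ^ 2) := sqrt_pos.2 (by linarith)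
  have hw : 0 < chordSlope C y := sqrt_pos.2 (by positivity)
  have hCk : C ^ 2 + √(1 - C ^ 2) ^ 2 = 1 := by rw [sq_sqrt (by linarith)]; ring
  refine ((hasDerivAt_div_mul_artanh_sub_arctan (hasDerivAt_chordSlope hy0 hP) hCk hk.ne'
    (sq_mul_chordSlope_lt_one hC hy0.le hy1)).const_mul 2).congr_deriv ?_
  rw [one_sub_sq_mul_chordSlope hC hy0.le hy1, one_add_sq_mul_chordSlope hC hy0.le hy1,
    show 1 - y ^ 2 = (1 - y) * (1 + y) by ring]
  have : 1 - y ≠ 0 := by linarith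
  have : 1 + y ≠ 0 := by linarith
  set P := 1 + y - 2 * C ^ 2 * y
  field_simp

lemma continuousOn_areaPrimitive (hC : C ^ 2 < 1) :
    ContinuousOn (areaPrimitive C) (Ico 0 1) := by
  intro t ht
  have hw := continuousOn_chordSlope hC t ht
  have hA := (hasDerivAt_artanh (sq_mul_chordSlope_lt_one hC ht.1 ht.2)).continuousAt
  have := hA.comp_continuousWithinAt (f := fun s => √(1 - C ^ 2) * chordSlope C s)
    (hw.const_mul _)
  unfold areaPrimitive
  fun_prop

lemma areaPrimitive_zero : areaPrimitive C 0 = 0 := by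
  simp [areaPrimitive, chordSlope, artanh]

end areaPrimitive

theorem area_truncated_h_elliptic_parabolic_disk (C η : ℝ) (hC0 : 0 < C) (hC1 : C < 1)
    (hη0 : 0 ≤ η) (hη1 : η < 1) :
    (∫ y in (0:ℝ)..η, ∫ x in (-(C * Real.sqrt (2 * y * (1 - y))))..(C * Real.sqrt (2 * y * (1 - y))),
        (1 - x ^ 2 - y ^ 2) ^ (-(3:ℝ)/2)) =
      2 * C / Real.sqrt (1 - C ^ 2) *
        artanh (Real.sqrt (2 * η) * Real.sqrt (1 - C ^ 2) / Real.sqrt (1 + η - 2 * C ^ 2 * η)) -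
      2 * Real.arctan (C * Real.sqrt (2 * η) / Real.sqrt (1 + η - 2 * C ^ 2 * η)) := by
  have hC : C ^ 2 < 1 := by nlinarith
  have hη : Icc 0 η ⊆ Ico 0 1 := Icc_subset_Ico_right hη1
  have hinner : EqOn (fun y => ∫ x in -(C * √(2 * y * (1 - y)))..(C * √(2 * y * (1 - y))),
      (1 - x ^ 2 - y ^ 2) ^ (-(3:ℝ) / 2)) (fun y => 2 * C * chordSlope C y / (1 - y ^ 2))
      (uIcc 0 η) := fun y hy => by
    rw [uIcc_of_le hη0] at hy
    exact integral_parabolic_chord hC (hη hy).1 (hη hy).2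
  have hg : ContinuousOn (fun y => 2 * C * chordSlope C y / (1 - y ^ 2)) (Icc 0 η) :=
    (continuousOn_const.mul ((continuousOn_chordSlope hC).mono hη)).div (by fun_prop)
      fun y hy => by nlinarith [(hη hy).1, (hη hy).2]
  rw [integral_congr hinner, integral_eq_sub_of_hasDeriv_right_of_le hη0
    ((continuousOn_areaPrimitive hC).mono hη)
    (fun y hy => (hasDerivAt_areaPrimitive hC hy.1 (hy.2.trans hη1)).hasDerivWithinAt)
    (hg.intervalIntegrable_of_Icc hη0), areaPrimitive_zero, sub_zero, areaPrimitive, chordSlope,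
    sqrt_div (by positivity)]
  ring_nf
end

section
/- Define G(C) = (2/√(1−C²))·ln( C/(2√(1−C²)) ) + 2·artanh √(1−C²) + 2·artanh C for C ∈ (0,1). Then G is strictly increasing on (0,1), lim_{C→0⁺} G(C) = 0, and lim_{C→1⁻} G(C) = +∞. -/
open Filter

/-!
Write `s = √(1 - C²)`. Differentiating gives `G'(C) = 2C/s³ · (1 + s/C + log (C/(2s)))`, and
`log (s/C) ≤ s/C - 1` bounds the bracket below by `2 - log 2 > 0`. Near `0` the identity
`artanh s = log ((1 + s)/C)` cancels the logarithmic singularity of the first term up to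
`(2/s - 2) log C = O(C² log C)`. Near `1` the first term tends to `+∞`, while `artanh s → 0` and
`artanh C ≥ 0`.
-/

open Real hiding artanh
open Set Topology

theorem hasDerivAt_artanh_s11 {x : ℝ} (h₁ : -1 < x) (h₂ : x < 1) :
    HasDerivAt artanh (1 - x ^ 2)⁻¹ x := by
  have hp : 0 < 1 + x := by linarith
  have hm : 0 < 1 - x := by linarith
  have hsq : 1 - x ^ 2 ≠ 0 := by nlinarith
  refine ((((hasDerivAt_id' x).const_add 1).fun_div ((hasDerivAt_id' x).const_sub 1) hm.ne').log
    (div_pos hp hm).ne' |>.div_const 2).congr_deriv ?_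
  field_simp
  ring

theorem tendsto_artanh_nhds_zero : Tendsto artanh (𝓝 0) (𝓝 0) := by
  simpa [artanh] using (hasDerivAt_artanh_s11 (x := 0) (by norm_num) (by norm_num)).continuousAt.tendsto

theorem artanh_nonneg_of_lt_one {x : ℝ} (h₀ : 0 ≤ x) (h₁ : x < 1) : 0 ≤ artanh x :=
  div_nonneg (log_nonneg ((one_le_div (by linarith)).2 (by linarith))) zero_le_two

theorem artanh_sqrt_one_sub_sq {C : ℝ} (h₀ : 0 < C) (h₁ : C ≤ 1) :
    artanh √(1 - C ^ 2) = log ((1 + √(1 - C ^ 2)) / C) := by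
  set s := √(1 - C ^ 2)
  have hs : s ^ 2 = 1 - C ^ 2 := sq_sqrt (by nlinarith)
  have hs1 : 1 - s ≠ 0 := fun h => by nlinarith
  have key : (1 + s) / (1 - s) = ((1 + s) / C) ^ 2 := by
    field_simp
    linear_combination (1 + s) * hs
  rw [artanh, key, log_pow]
  ring

theorem hasDerivAt_sqrt_one_sub_sq {x : ℝ} (hx : x ^ 2 < 1) :
    HasDerivAt (fun C => √(1 - C ^ 2)) (-x / √(1 - x ^ 2)) x := by
  have hs : √(1 - x ^ 2) ≠ 0 := (sqrt_pos.2 (by linarith)).ne'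
  refine (((hasDerivAt_pow 2 x).const_sub 1).sqrt (by linarith)).congr_deriv ?_
  field_simp
  ring

theorem tendsto_sqrt_one_sub_sq_nhdsLT_one :
    Tendsto (fun C : ℝ => √(1 - C ^ 2)) (𝓝[<] 1) (𝓝[>] 0) := by
  refine tendsto_nhdsWithin_iff.2 ⟨?_, ?_⟩
  · have : ContinuousAt (fun C : ℝ => √(1 - C ^ 2)) 1 := by fun_prop
    simpa using this.tendsto.mono_left nhdsWithin_le_nhds
  · filter_upwards [Ioo_mem_nhdsLT one_pos] with C hC
    exact sqrt_pos.2 (by nlinarith [hC.1, hC.2])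

theorem one_add_div_add_log_div_two_mul_pos {a b : ℝ} (ha : 0 < a) (hb : 0 < b) :
    0 < 1 + b / a + log (a / (2 * b)) := by
  have hle : log (b / a) ≤ b / a - 1 := log_le_sub_one_of_pos (by positivity)
  have hsplit : log (a / (2 * b)) = -log 2 - log (b / a) := by
    rw [log_div ha.ne' (by positivity), log_mul two_ne_zero hb.ne', log_div hb.ne' ha.ne']
    ring
  linarith [log_two_lt_d9]

noncomputable def circumferenceGap (C : ℝ) : ℝ :=
  2 / √(1 - C ^ 2) * log (C / (2 * √(1 - C ^ 2))) + 2 * artanh √(1 - C ^ 2) + 2 * artanh C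

theorem hasDerivAt_circumferenceGap {C : ℝ} (h₀ : 0 < C) (h₁ : C < 1) :
    HasDerivAt circumferenceGap
      (2 * C / √(1 - C ^ 2) ^ 3 * (1 + √(1 - C ^ 2) / C + log (C / (2 * √(1 - C ^ 2))))) C := by
  have hC : C ^ 2 < 1 := by nlinarith
  have ds := hasDerivAt_sqrt_one_sub_sq hC
  set s := √(1 - C ^ 2) with hs_def
  have hs : 0 < s := sqrt_pos.2 (by linarith)
  have hss : s ^ 2 = 1 - C ^ 2 := sq_sqrt (by linarith)
  have hs1 : s < 1 := by nlinarith
  have h2s : 0 < 2 * s := by positivity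
  have dInv := (hasDerivAt_const C (2 : ℝ)).fun_div ds hs.ne'
  have dLog := ((hasDerivAt_id' C).fun_div (ds.const_mul 2) h2s.ne').log (div_pos h₀ h2s).ne'
  have dArtanhS := (hasDerivAt_artanh_s11 (by linarith) hs1).comp C ds
  have dArtanhC := hasDerivAt_artanh_s11 (by linarith) h₁
  refine (((dInv.mul dLog).add (dArtanhS.const_mul 2)).add (dArtanhC.const_mul 2)).congr_deriv ?_
  rw [← hs_def, show 1 - s ^ 2 = C ^ 2 by linarith, ← hss]
  field_simp
  ring

theorem strictMonoOn_circumferenceGap : StrictMonoOn circumferenceGap (Ioo 0 1) := by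
  refine strictMonoOn_of_deriv_pos (convex_Ioo 0 1)
    (fun C hC => (hasDerivAt_circumferenceGap hC.1 hC.2).continuousAt.continuousWithinAt)
    fun C hC => ?_
  obtain ⟨h₀, h₁⟩ : C ∈ Ioo 0 1 := by rwa [interior_Ioo] at hC
  have hs : 0 < √(1 - C ^ 2) := sqrt_pos.2 (by nlinarith)
  rw [(hasDerivAt_circumferenceGap h₀ h₁).deriv]
  exact mul_pos (by positivity) (one_add_div_add_log_div_two_mul_pos h₀ hs)

theorem circumferenceGap_eq_of_pos_of_lt_one {C : ℝ} (h₀ : 0 < C) (h₁ : C < 1) :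
    circumferenceGap C = C * log C * (2 * C / (√(1 - C ^ 2) * (1 + √(1 - C ^ 2)))) +
      (2 * log (1 + √(1 - C ^ 2)) - 2 / √(1 - C ^ 2) * log (2 * √(1 - C ^ 2))) +
      2 * artanh C := by
  rw [circumferenceGap, artanh_sqrt_one_sub_sq h₀ h₁.le]
  set s := √(1 - C ^ 2)
  have hs : 0 < s := sqrt_pos.2 (by nlinarith)
  have hss : s ^ 2 = 1 - C ^ 2 := sq_sqrt (by nlinarith)
  have hcoef : 2 / s - 2 = 2 * C * C / (s * (1 + s)) := by
    field_simp
    linear_combination -hss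
  rw [log_div h₀.ne' (by positivity), log_div (by positivity) h₀.ne']
  linear_combination log C * hcoef

theorem tendsto_circumferenceGap_nhdsGT_zero : Tendsto circumferenceGap (𝓝[>] 0) (𝓝 0) := by
  have hEq : (fun C => C * log C * (2 * C / (√(1 - C ^ 2) * (1 + √(1 - C ^ 2)))) +
      (2 * log (1 + √(1 - C ^ 2)) - 2 / √(1 - C ^ 2) * log (2 * √(1 - C ^ 2))) +
      2 * artanh C) =ᶠ[𝓝[>] 0] circumferenceGap :=
    eventuallyEq_of_mem (Ioo_mem_nhdsGT one_pos) fun C hC =>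
      (circumferenceGap_eq_of_pos_of_lt_one hC.1 hC.2).symm
  refine Tendsto.congr' hEq ?_
  have hMulLog : Tendsto (fun C => C * log C) (𝓝[>] 0) (𝓝 0) := by
    simpa using continuous_mul_log.tendsto 0 |>.mono_left nhdsWithin_le_nhds
  have hs : Tendsto (fun C : ℝ => √(1 - C ^ 2)) (𝓝[>] 0) (𝓝 1) := by
    have : Continuous (fun C : ℝ => √(1 - C ^ 2)) := by fun_prop
    simpa using this.tendsto 0 |>.mono_left nhdsWithin_le_nhds
  have hC : Tendsto (fun C : ℝ => C) (𝓝[>] 0) (𝓝 0) := nhdsWithin_le_nhds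
  have hFactor := (hC.const_mul 2).div (hs.mul (hs.const_add 1)) (by norm_num)
  have hLog := ((hs.const_add 1).log (by norm_num)).const_mul 2
  have hInvLog := ((tendsto_const_nhds (x := (2 : ℝ))).div hs one_ne_zero).mul
    ((hs.const_mul 2).log (by norm_num))
  have hArtanh := (tendsto_artanh_nhds_zero.mono_left (nhdsWithin_le_nhds (s := Ioi 0))).const_mul 2
  simpa [one_add_one_eq_two] using ((hMulLog.mul hFactor).add (hLog.sub hInvLog)).add hArtanh

theorem tendsto_circumferenceGap_nhdsLT_one : Tendsto circumferenceGap (𝓝[<] 1) atTop := by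
  have hs := tendsto_sqrt_one_sub_sq_nhdsLT_one
  have hInv : Tendsto (fun C : ℝ => (√(1 - C ^ 2))⁻¹) (𝓝[<] 1) atTop :=
    tendsto_inv_nhdsGT_zero.comp hs
  have hC : Tendsto (fun C : ℝ => C / 2) (𝓝[<] 1) (𝓝 (1 / 2)) :=
    (tendsto_id.mono_left nhdsWithin_le_nhds).div_const 2
  have hArg : Tendsto (fun C : ℝ => C / (2 * √(1 - C ^ 2))) (𝓝[<] 1) atTop :=
    (hC.pos_mul_atTop one_half_pos hInv).congr fun C => by field_simp
  have hMain : Tendsto (fun C : ℝ => 2 / √(1 - C ^ 2) * log (C / (2 * √(1 - C ^ 2))))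
      (𝓝[<] 1) atTop :=
    ((hInv.const_mul_atTop two_pos).congr fun C => by ring).atTop_mul_atTop₀
      (tendsto_log_atTop.comp hArg)
  have hArtanhS := (tendsto_artanh_nhds_zero.comp (hs.mono_right nhdsWithin_le_nhds)).const_mul 2
  have hArtanhC : ∀ᶠ C in 𝓝[<] (1 : ℝ), 0 ≤ 2 * artanh C := by
    filter_upwards [Ioo_mem_nhdsLT one_pos] with C hC
    exact mul_nonneg zero_le_two (artanh_nonneg_of_lt_one hC.1.le hC.2)
  exact tendsto_atTop_add_right_of_le' _ 0 (hMain.atTop_add hArtanhS) hArtanhC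

theorem G_properties (G : ℝ → ℝ)
    (hG : ∀ C, G C = 2 / Real.sqrt (1 - C ^ 2) * Real.log (C / (2 * Real.sqrt (1 - C ^ 2))) +
      2 * artanh (Real.sqrt (1 - C ^ 2)) + 2 * artanh C) :
    StrictMonoOn G (Set.Ioo 0 1) ∧
    Tendsto G (nhdsWithin 0 (Set.Ioi 0)) (nhds 0) ∧
    Tendsto G (nhdsWithin 1 (Set.Iio 1)) atTop := by
  obtain rfl : G = circumferenceGap := funext hG
  exact ⟨strictMonoOn_circumferenceGap, tendsto_circumferenceGap_nhdsGT_zero,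
    tendsto_circumferenceGap_nhdsLT_one⟩
end
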